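/- arXiv:2202.07151 — 3 statements merged into one kernel-verified Lean document; each statement's English description precedes it below -/
import Mathlib

section
/- Let (M, d) be a metric space, p ∈ M, and f : M → ℝ a nonnegative function such that f(p) > 0 and sup_{x ∈ B(p,2)} f(x) < ∞, where B(p,r) denotes the open metric ball of radius r. Then there exists a point q ∈ B(p,2) such that f(q) ≥ f(p) and f(x) ≤ 4·f(q) for every x in the ball B(q, f(p)^{1/2}·f(q)^{-1/2}). -/
/-! If no point of `B(p,2)` works, start at `p` and repeatedly jump from the current point `q` to a
point `x` with `f x > 4 f q` at distance less than `√(f p / f q)`. After `k` jumps `f ≥ 4ᵏ f p`,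
so the jump lengths are at most `2⁻ᵏ` and the chain never leaves `B(p,2)`, contradicting the
boundedness of `f` there. -/

open Metric

lemma Real.sqrt_div_sqrt_le_inv_two_pow {a b : ℝ} (ha : 0 < a) (k : ℕ) (hab : 4 ^ k * a ≤ b) :
    √a / √b ≤ 2⁻¹ ^ k := by
  have hb : 0 < b := lt_of_lt_of_le (by positivity) hab
  rw [← Real.sqrt_div' _ hb.le, Real.sqrt_le_left (by positivity), div_le_iff₀ hb]
  calc a = (2⁻¹ ^ k) ^ 2 * (4 ^ k * a) := by
        rw [← pow_mul, mul_comm k, pow_mul, ← mul_assoc, ← mul_pow]; norm_num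
    _ ≤ (2⁻¹ ^ k) ^ 2 * b := by gcongr

section

variable {M : Type*} [PseudoMetricSpace M] {f : M → ℝ} {p : M}

lemma mem_ball_two_of_dist_le {q : M} {k : ℕ} (h : dist q p ≤ 2 - 2 * 2⁻¹ ^ k) :
    q ∈ ball p 2 := by
  rw [mem_ball]
  linarith [show (0 : ℝ) < 2 * 2⁻¹ ^ k by positivity]

lemma exists_escape_chain (hfp : 0 < f p)
    (hescape : ∀ q ∈ ball p 2, f p ≤ f q →
      ∃ x ∈ ball q (√(f p) / √(f q)), 4 * f q < f x) (k : ℕ) :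
    ∃ q, dist q p ≤ 2 - 2 * 2⁻¹ ^ k ∧ 4 ^ k * f p ≤ f q := by
  induction k with
  | zero => exact ⟨p, by simp, by simp⟩
  | succ k ih =>
    obtain ⟨q, hqp, hfq⟩ := ih
    have hfpq : f p ≤ f q :=
      le_trans (le_mul_of_one_le_left hfp.le (one_le_pow₀ (by norm_num))) hfq
    obtain ⟨x, hxq, hfx⟩ := hescape q (mem_ball_two_of_dist_le hqp) hfpq
    have hjump : dist x q < 2⁻¹ ^ k :=
      lt_of_lt_of_le (mem_ball.1 hxq) (Real.sqrt_div_sqrt_le_inv_two_pow hfp k hfq)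
    refine ⟨x, ?_, ?_⟩
    · calc dist x p ≤ dist x q + dist q p := dist_triangle x q p
        _ ≤ 2 - 2 * 2⁻¹ ^ (k + 1) := by rw [pow_succ]; linarith
    · calc 4 ^ (k + 1) * f p = 4 * (4 ^ k * f p) := by ring
        _ ≤ 4 * f q := by gcongr
        _ ≤ f x := hfx.le

lemma not_bddAbove_of_escape (hfp : 0 < f p)
    (hescape : ∀ q ∈ ball p 2, f p ≤ f q →
      ∃ x ∈ ball q (√(f p) / √(f q)), 4 * f q < f x) :
    ¬BddAbove (f '' ball p 2) := by
  rintro ⟨C, hC⟩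
  obtain ⟨n, hn⟩ := pow_unbounded_of_one_lt (C / f p) (by norm_num : (1 : ℝ) < 4)
  obtain ⟨q, hqp, hfq⟩ := exists_escape_chain hfp hescape n
  have hfqC : f q ≤ C := hC ⟨q, mem_ball_two_of_dist_le hqp, rfl⟩
  rw [div_lt_iff₀ hfp] at hn
  linarith

end

theorem point_selection_general {M : Type*} [MetricSpace M] (p : M) (f : M → ℝ)
    (hfp : 0 < f p)
    (hbdd : BddAbove (f '' Metric.ball p 2)) :
    ∃ q ∈ Metric.ball p 2, f p ≤ f q ∧
      ∀ x ∈ Metric.ball q (Real.sqrt (f p) / Real.sqrt (f q)), f x ≤ 4 * f q := by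
  by_contra hgood
  push Not at hgood
  exact not_bddAbove_of_escape hfp hgood hbdd

/-- Point-selection lemma: if `f` is a nonnegative function on a metric space,
positive at `p` and bounded above on the ball `B(p,2)`, then there is a point
`q ∈ B(p,2)` with `f q ≥ f p` such that `f ≤ 4 f(q)` on the ball of radius
`√(f p) / √(f q)` about `q`. -/
theorem point_selection {M : Type*} [MetricSpace M] (p : M) (f : M → ℝ)
    (hf_nonneg : ∀ x, 0 ≤ f x) (hfp : 0 < f p)
    (hbdd : BddAbove (f '' Metric.ball p 2)) :
    ∃ q ∈ Metric.ball p 2, f p ≤ f q ∧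
      ∀ x ∈ Metric.ball q (Real.sqrt (f p) / Real.sqrt (f q)), f x ≤ 4 * f q :=
  point_selection_general p f hfp hbdd
end

section
/- Let m > 0, c ≥ 0 and T > 0 be real numbers, and let H : [0, T) → ℝ be a differentiable function satisfying H'(t) ≥ H(t)²/m − m·c for all t ∈ [0, T). Then for every t₀ ∈ [0, T/2] one has H(t₀) ≤ max{ m·√(2c), 4m/T }. -/
/-!
If `a = H t₀` exceeds the bound, then `a² > 2m²c`, so `H' > 0` wherever `H = a` and `H` never
drops below `a`; on `{H ≥ a}` the inequality improves to `H' ≥ H² / (2m)`. Hence `-1/H` grows at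
rate at least `1/(2m)` and `H` blows up before time `t₀ + 2m/a`, which is `< T` because
`a > 4m/T`.
-/

open Set

theorem le_image_of_deriv_right_pos_at_level {f f' : ℝ → ℝ} {a b y : ℝ}
    (hf : ContinuousOn f (Icc a b)) (hf' : ∀ x ∈ Ico a b, HasDerivWithinAt f (f' x) (Ici x) x)
    (ha : y ≤ f a) (hlevel : ∀ x ∈ Ico a b, f x = y → 0 < f' x) :
    ∀ ⦃x⦄, x ∈ Icc a b → y ≤ f x := by
  intro x hx
  have key := image_le_of_deriv_right_lt_deriv_boundary' (f := fun t => -f t)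
    (f' := fun t => -f' t) (B := fun _ => -y) (B' := fun _ => 0) hf.neg
    (fun t ht => (hf' t ht).neg) (neg_le_neg ha) continuousOn_const
    (fun _ _ => hasDerivWithinAt_const _ _ _)
    (fun t ht heq => neg_neg_of_pos (hlevel t ht (neg_injective heq))) hx
  exact neg_le_neg_iff.mp key

theorem sub_lt_div_of_sq_div_le_deriv_right {f f' : ℝ → ℝ} {a b k : ℝ} (hk : 0 < k) (hab : a ≤ b)
    (hf : ContinuousOn f (Icc a b)) (hf' : ∀ x ∈ Ico a b, HasDerivWithinAt f (f' x) (Ici x) x)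
    (hpos : ∀ x ∈ Icc a b, 0 < f x) (hric : ∀ x ∈ Ico a b, f x ^ 2 / k ≤ f' x) :
    b - a < k / f a := by
  have hfb := hpos b (right_mem_Icc.2 hab)
  -- `(-1/f)' = f'/f² ≥ 1/k`, so `-1/f` stays above the line of slope `1/k` through `-1/f a`.
  have key := image_le_of_deriv_right_le_deriv_boundary
    (f := fun t => (t - a) / k - (f a)⁻¹) (f' := fun _ => k⁻¹)
    (B := fun t => -(f t)⁻¹) (B' := fun t => f' t / f t ^ 2) (by fun_prop)
    (fun t _ => (((hasDerivWithinAt_id t _).sub_const a).div_const k).sub_const _ |>.congr_deriv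
      (by simp [one_div]))
    (by simp) (hf.inv₀ fun t ht => (hpos t ht).ne').neg
    (fun t ht => ((hf' t ht).inv (hpos t (Ico_subset_Icc_self ht)).ne').neg.congr_deriv
      (by ring))
    (fun t ht => by
      rw [le_div_iff₀ (pow_pos (hpos t (Ico_subset_Icc_self ht)) 2), inv_mul_eq_div]
      exact hric t ht)
    (right_mem_Icc.2 hab)
  have : (b - a) / k < (f a)⁻¹ := by linarith [inv_pos.2 hfb]
  rwa [div_lt_iff₀ hk, inv_mul_eq_div] at this

theorem sub_lt_of_sq_div_sub_le_deriv_right {f f' : ℝ → ℝ} {a b m c : ℝ} (hm : 0 < m)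
    (hf : ContinuousOn f (Icc a b)) (hf' : ∀ x ∈ Ico a b, HasDerivWithinAt f (f' x) (Ici x) x)
    (hric : ∀ x ∈ Ico a b, f x ^ 2 / m - m * c ≤ f' x) (hfa : 0 < f a)
    (hfac : 2 * m ^ 2 * c < f a ^ 2) :
    b - a < 2 * m / f a := by
  rcases lt_or_ge b a with hba | hab
  · linarith [div_pos (mul_pos two_pos hm) hfa]
  have hge : ∀ x ∈ Icc a b, f a ≤ f x := by
    refine le_image_of_deriv_right_pos_at_level hf hf' le_rfl fun x hx hfx => ?_
    have : m * c < f a ^ 2 / m := by rw [lt_div_iff₀ hm]; nlinarith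
    linarith [hfx ▸ hric x hx]
  refine sub_lt_div_of_sq_div_le_deriv_right (by positivity) hab hf hf'
    (fun x hx => hfa.trans_le (hge x hx)) fun x hx => (le_trans ?_ (hric x hx))
  have hsq := pow_le_pow_left₀ hfa.le (hge x (Ico_subset_Icc_self hx)) 2
  rw [div_sub' hm.ne', div_le_div_iff₀ (by positivity) hm]
  nlinarith [mul_le_mul_of_nonneg_left hsq hm.le]

theorem riccati_mean_curvature_bound_general (m c T : ℝ) (hm : 0 < m) (hT : 0 < T)
    (H H' : ℝ → ℝ)
    (hderiv : ∀ t ∈ Set.Ico (0 : ℝ) T, HasDerivWithinAt H (H' t) (Set.Ico 0 T) t)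
    (hineq : ∀ t ∈ Set.Ico (0 : ℝ) T, (H t) ^ 2 / m - m * c ≤ H' t) :
    ∀ t₀ ∈ Set.Icc (0 : ℝ) (T / 2), H t₀ ≤ max (m * Real.sqrt (2 * c)) (4 * m / T) := by
  rintro t₀ ⟨ht₀, ht₀T⟩
  by_contra! hbig
  rw [max_lt_iff] at hbig
  have ha : 0 < H t₀ := lt_of_le_of_lt (by positivity) hbig.2
  have hac : 2 * m ^ 2 * c < H t₀ ^ 2 := by
    have := (Real.sqrt_lt' (div_pos ha hm)).mp ((lt_div_iff₀' hm).mpr hbig.1)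
    rw [div_pow, lt_div_iff₀ (by positivity)] at this
    linarith
  have hs : t₀ + 2 * m / H t₀ < T := by
    have : 2 * m / H t₀ < T / 2 := by
      rw [div_lt_div_iff₀ ha two_pos]
      linarith [(div_lt_iff₀ hT).mp hbig.2]
    linarith
  have hsub : Icc t₀ (t₀ + 2 * m / H t₀) ⊆ Ico 0 T :=
    fun x hx => ⟨ht₀.trans hx.1, hx.2.trans_lt hs⟩
  have hright : ∀ x ∈ Ico t₀ (t₀ + 2 * m / H t₀), HasDerivWithinAt H (H' x) (Ici x) x :=
    fun x hx => (hderiv x (hsub (Ico_subset_Icc_self hx))).mono_of_mem_nhdsWithin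
      (Ico_mem_nhdsGE_of_mem (hsub (Ico_subset_Icc_self hx)))
  have := sub_lt_of_sq_div_sub_le_deriv_right hm
    (fun x hx => ((hderiv x (hsub hx)).continuousWithinAt).mono hsub) hright
    (fun x hx => hineq x (hsub (Ico_subset_Icc_self hx))) ha hac
  simp at this

/-- Riccati-type ODE estimate: if `H` satisfies `H' ≥ H²/m − m·c` on `[0,T)`,
then `H(t₀) ≤ max (m√(2c)) (4m/T)` for all `t₀ ∈ [0, T/2]`. -/
theorem riccati_mean_curvature_bound (m c T : ℝ) (hm : 0 < m) (hc : 0 ≤ c) (hT : 0 < T)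
    (H H' : ℝ → ℝ)
    (hderiv : ∀ t ∈ Set.Ico (0 : ℝ) T, HasDerivWithinAt H (H' t) (Set.Ico 0 T) t)
    (hineq : ∀ t ∈ Set.Ico (0 : ℝ) T, (H t) ^ 2 / m - m * c ≤ H' t) :
    ∀ t₀ ∈ Set.Icc (0 : ℝ) (T / 2), H t₀ ≤ max (m * Real.sqrt (2 * c)) (4 * m / T) :=
  riccati_mean_curvature_bound_general m c T hm hT H H' hderiv hineq
end

section
/- Let n ≥ 1, let U ⊆ ℝⁿ be an open set invariant under the reflection σ(x₁,…,x_{n−1},x_n) = (x₁,…,x_{n−1},−x_n), and let u : ℝⁿ → ℝ satisfy u(σ(x)) = u(x) for all x ∈ U. Suppose u is C² on U⁺ := U ∩ {x : x_n ≥ 0} in the sense of being twice continuously differentiable within U⁺ (ContDiffOn of order 2 on U⁺), and that the partial derivative ∂u/∂x_n, computed within U⁺, vanishes at every point of U ∩ {x : x_n = 0}. Then u is C² on all of U. -/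
/-!
Since `u = u ∘ σ`, the function `u` is also `C²` on the lower half `U⁻ = U ∩ {xₙ ≤ 0}`, and
`U = U⁺ ∪ U⁻` with both pieces relatively closed. A function that is `C¹` on each piece, with
one-sided derivatives agreeing on `U⁺ ∩ U⁻`, is `C¹` on `U`; we apply this to `u` and then to
`Du`. For `u`, the one-sided derivatives at a boundary point `z` are `Du(z)` and `Du(z) ∘ σ`,
which agree because `∂ₙu(z) = 0`. The derivative satisfies `Du(σx) = Du(x) ∘ σ`, so for `Du` they
are `D²u(z)(v, w)` and `D²u(z)(σv, σw)`; these agree because `D²u(z)` is symmetric and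
`D²u(z)(w, eₙ) = 0` for tangential `w`, being a tangential derivative of the vanishing `∂ₙu`.
-/

open Set Filter Topology

section Gluing

variable {𝕜 E F : Type*} [NontriviallyNormedField 𝕜] [NormedAddCommGroup E] [NormedSpace 𝕜 E]
  [NormedAddCommGroup F] [NormedSpace 𝕜 F] {f : E → F} {U s t : Set E}

theorem contDiffOn_one_of_closed_cover {f₁ f₂ : E → E →L[𝕜] F} (hU : IsOpen U)
    (hs : IsClosed s) (ht : IsClosed t) (hcover : U ⊆ s ∪ t)
    (hf₁ : ∀ x ∈ U ∩ s, HasFDerivWithinAt f (f₁ x) (U ∩ s) x)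
    (hf₂ : ∀ x ∈ U ∩ t, HasFDerivWithinAt f (f₂ x) (U ∩ t) x)
    (hc₁ : ContinuousOn f₁ (U ∩ s)) (hc₂ : ContinuousOn f₂ (U ∩ t))
    (heq : ∀ x ∈ U ∩ s ∩ t, f₁ x = f₂ x) :
    ContDiffOn 𝕜 1 f U := by
  classical
  set g := s.piecewise f₁ f₂
  have hg₁ : EqOn g f₁ (U ∩ s) := fun x hx => piecewise_eq_of_mem _ _ _ hx.2
  have hg₂ : EqOn g f₂ (U ∩ t) := fun x hx => by
    by_cases hxs : x ∈ s
    · rw [hg₁ ⟨hx.1, hxs⟩, heq x ⟨⟨hx.1, hxs⟩, hx.2⟩]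
    · exact piecewise_eq_of_notMem _ _ _ hxs
  have hU' : U ⊆ (U ∩ s) ∪ (U ∩ t) := fun x hx => (hcover hx).imp (⟨hx, ·⟩) (⟨hx, ·⟩)
  -- at points of `U` off the closed set `c`, both properties hold vacuously
  have side {c : Set E} (hc : IsClosed c) {φ : E → E →L[𝕜] F}
      (hφ : ∀ x ∈ U ∩ c, HasFDerivWithinAt f (φ x) (U ∩ c) x) (hφc : ContinuousOn φ (U ∩ c))
      (hgφ : EqOn g φ (U ∩ c)) {x : E} (hx : x ∈ U) :
      HasFDerivWithinAt f (g x) (U ∩ c) x ∧ ContinuousWithinAt g (U ∩ c) x := by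
    by_cases hxc : x ∈ c
    · exact ⟨hgφ ⟨hx, hxc⟩ ▸ hφ x ⟨hx, hxc⟩, (hφc x ⟨hx, hxc⟩).congr hgφ (hgφ ⟨hx, hxc⟩)⟩
    · have hx' : x ∉ closure (U ∩ c) :=
        fun h => hxc (hc.closure_subset (closure_mono inter_subset_right h))
      exact ⟨.of_notMem_closure hx', continuousWithinAt_of_notMem_closure hx'⟩
  have hderiv : ∀ x ∈ U, HasFDerivAt f (g x) x := fun x hx =>
    ((side hs hf₁ hc₁ hg₁ hx).1.union (side ht hf₂ hc₂ hg₂ hx).1).hasFDerivAt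
      (mem_of_superset (hU.mem_nhds hx) hU')
  have hcont : ContinuousOn g U := fun x hx =>
    ((side hs hf₁ hc₁ hg₁ hx).2.union (side ht hf₂ hc₂ hg₂ hx).2).mono hU'
  rw [← zero_add (1 : WithTop ℕ∞), contDiffOn_succ_iff_fderiv_of_isOpen hU]
  refine ⟨fun x hx => (hderiv x hx).differentiableAt.differentiableWithinAt, by simp, ?_⟩
  exact contDiffOn_zero.2 (hcont.congr fun x hx => (hderiv x hx).fderiv)

end Gluing

theorem HasFDerivWithinAt.map_sub_eq_zero_of_eqOn {E F : Type*} [NormedAddCommGroup E]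
    [NormedSpace ℝ E] [NormedAddCommGroup F] [NormedSpace ℝ F] {f : E → F} {f' : E →L[ℝ] F}
    {s t V : Set E} {x y : E} (hf : HasFDerivWithinAt f f' t x) (hs : Convex ℝ s)
    (hV : V ∈ 𝓝 x) (hst : s ∩ V ⊆ t) (hconst : ∀ z ∈ s ∩ V, f z = f x) (hx : x ∈ s)
    (hy : y ∈ s) : f' (y - x) = 0 := by
  have h₀ : HasFDerivWithinAt f (0 : E →L[ℝ] F) (s ∩ V) x :=
    (hasFDerivWithinAt_const (f x) x _).congr hconst rfl
  have hyx : y - x ∈ tangentConeAt ℝ (s ∩ V) x := by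
    rw [tangentConeAt_inter_nhds hV]
    exact mem_tangentConeAt_of_segment_subset (hs.segment_subset hx hy)
  exact (hf.mono hst).unique_on h₀ hyx

section Reflection

variable {ι : Type*} {i : ι} {F : Type*} [NormedAddCommGroup F] [NormedSpace ℝ F]

theorem convex_setOf_nonneg_apply : Convex ℝ {x : ι → ℝ | 0 ≤ x i} :=
  convex_halfSpace_ge ⟨fun _ _ => rfl, fun _ _ => rfl⟩ 0

theorem convex_setOf_apply_eq_zero : Convex ℝ {x : ι → ℝ | x i = 0} :=
  convex_hyperplane ⟨fun _ _ => rfl, fun _ _ => rfl⟩ 0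

variable [DecidableEq ι]

def coordReflection (i : ι) : (ι → ℝ) →L[ℝ] (ι → ℝ) :=
  ContinuousLinearMap.id ℝ _ -
    ((2 : ℝ) • ContinuousLinearMap.proj i).smulRight (Pi.single i 1)

theorem coordReflection_apply (x : ι → ℝ) :
    coordReflection i x = x - (2 * x i) • Pi.single i 1 := by
  simp [coordReflection]

theorem coordReflection_apply_self (x : ι → ℝ) : coordReflection i x i = -x i := by
  simp [coordReflection_apply]; ring

theorem coordReflection_eq_update (x : ι → ℝ) :
    coordReflection i x = Function.update x i (-x i) := by
  ext j
  rcases eq_or_ne j i with rfl | hj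
  · simp [coordReflection_apply_self]
  · simp [coordReflection_apply, hj]

theorem coordReflection_coordReflection (x : ι → ℝ) :
    coordReflection i (coordReflection i x) = x := by
  rw [coordReflection_eq_update, coordReflection_eq_update]; simp

theorem coordReflection_of_apply_eq_zero {x : ι → ℝ} (hx : x i = 0) : coordReflection i x = x := by
  simp [coordReflection_apply, hx]

theorem ContinuousLinearMap.comp_coordReflection_eq_self {L : (ι → ℝ) →L[ℝ] F}
    (hL : L (Pi.single i 1) = 0) : L.comp (coordReflection i) = L := by
  ext x; simp [coordReflection_apply, hL]

theorem ContinuousLinearMap.apply_coordReflection_coordReflection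
    {B : (ι → ℝ) →L[ℝ] (ι → ℝ) →L[ℝ] F} (hB : ∀ v w, B v w = B w v)
    (htang : ∀ w : ι → ℝ, w i = 0 → B w (Pi.single i 1) = 0) (v w : ι → ℝ) :
    B (coordReflection i v) (coordReflection i w) = B v w := by
  -- `w - w i • Pi.single i 1` is tangential, so `B` sees only the normal component of `w`
  have hnormal (w : ι → ℝ) : B w (Pi.single i 1) = w i • B (Pi.single i 1) (Pi.single i 1) := by
    have := htang (w - w i • Pi.single i 1) (by simp)
    rwa [map_sub, map_smul, sub_apply, smul_apply, sub_eq_zero] at this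
  simp only [coordReflection_apply, map_sub, map_smul, sub_apply, smul_apply]
  rw [hB (Pi.single i 1) w, hnormal v, hnormal w]
  module

theorem interior_setOf_nonneg_apply_nonempty : (interior {x : ι → ℝ | 0 ≤ x i}).Nonempty := by
  have hpos : {x : ι → ℝ | 0 < x i} ⊆ interior {x | 0 ≤ x i} :=
    interior_maximal (fun x (hx : 0 < x i) => hx.le)
      (isOpen_lt continuous_const (continuous_apply i))
  exact ⟨Pi.single i 1, hpos (by simp)⟩

theorem uniqueDiffOn_inter_setOf_nonneg_apply {U : Set (ι → ℝ)} (hU : IsOpen U) :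
    UniqueDiffOn ℝ (U ∩ {x | 0 ≤ x i}) := by
  rw [inter_comm]
  exact (uniqueDiffOn_convex convex_setOf_nonneg_apply
    interior_setOf_nonneg_apply_nonempty).inter hU

theorem subset_closure_interior_inter_setOf_nonneg_apply {U : Set (ι → ℝ)} (hU : IsOpen U) :
    U ∩ {x | 0 ≤ x i} ⊆ closure (interior (U ∩ {x | 0 ≤ x i})) := by
  rw [interior_inter, hU.interior_eq]
  refine Subset.trans ?_ hU.inter_closure
  rw [convex_setOf_nonneg_apply.closure_interior_eq_closure_of_nonempty_interior
    interior_setOf_nonneg_apply_nonempty,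
    (isClosed_le continuous_const (continuous_apply i)).closure_eq]

variable [Fintype ι]

theorem contDiffOn_one_of_coordReflection {U : Set (ι → ℝ)} (hU : IsOpen U)
    (hUinv : ∀ x ∈ U, coordReflection i x ∈ U) (T : F →L[ℝ] F) {v : (ι → ℝ) → F}
    (hequiv : ∀ x ∈ U, v (coordReflection i x) = T (v x))
    {v' : (ι → ℝ) → (ι → ℝ) →L[ℝ] F}
    (hv : ∀ x ∈ U ∩ {x | 0 ≤ x i}, HasFDerivWithinAt v (v' x) (U ∩ {x | 0 ≤ x i}) x)
    (hv' : ContinuousOn v' (U ∩ {x | 0 ≤ x i}))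
    (hinterface : ∀ z ∈ U, z i = 0 → T ∘L v' z ∘L coordReflection i = v' z) :
    ContDiffOn ℝ 1 v U := by
  set R := coordReflection i
  have hmaps : MapsTo R (U ∩ {x | x i ≤ 0}) (U ∩ {x | 0 ≤ x i}) := fun x hx =>
    ⟨hUinv x hx.1, by simpa [R, coordReflection_apply_self] using hx.2⟩
  have hlower : ∀ x ∈ U ∩ {x | x i ≤ 0}, T (v (R x)) = v x := fun x hx => by
    rw [← hequiv _ (hUinv x hx.1), coordReflection_coordReflection]
  refine contDiffOn_one_of_closed_cover (f₂ := fun x => T ∘L v' (R x) ∘L R) hU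
    (isClosed_le continuous_const (continuous_apply i))
    (isClosed_le (continuous_apply i) continuous_const) (fun x _ => le_total 0 (x i)) hv
    (fun x hx => ?_) hv' ?_ fun x hx => ?_
  · exact (T.hasFDerivAt.comp_hasFDerivWithinAt x
      ((hv (R x) (hmaps hx)).comp x R.hasFDerivWithinAt hmaps)).congr
      (fun y hy => (hlower y hy).symm) (hlower x hx).symm
  · exact continuousOn_const.clm_comp
      ((hv'.comp R.continuous.continuousOn hmaps).clm_comp continuousOn_const)
  · have hxi : x i = 0 := le_antisymm hx.2 hx.1.2
    simp only [coordReflection_of_apply_eq_zero hxi, hinterface x hx.1.1 hxi, R]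

theorem fderiv_coordReflection_eq_comp {U : Set (ι → ℝ)} (hU : IsOpen U)
    (hUinv : ∀ x ∈ U, coordReflection i x ∈ U) {u : (ι → ℝ) → F}
    (hsym : ∀ x ∈ U, u (coordReflection i x) = u x) {x : ι → ℝ} (hx : x ∈ U)
    (hu : DifferentiableAt ℝ u x) :
    fderiv ℝ u (coordReflection i x) = fderiv ℝ u x ∘L coordReflection i := by
  have hloc : u ∘ coordReflection i =ᶠ[𝓝 (coordReflection i x)] u :=
    eventually_of_mem (hU.mem_nhds (hUinv x hx)) hsym
  have hcomp : HasFDerivAt (u ∘ coordReflection i) (fderiv ℝ u x ∘L coordReflection i)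
      (coordReflection i x) := by
    have hu' : HasFDerivAt u (fderiv ℝ u x) (coordReflection i (coordReflection i x)) := by
      rw [coordReflection_coordReflection]; exact hu.hasFDerivAt
    exact hu'.comp _ (coordReflection i).hasFDerivAt
  exact (hloc.hasFDerivAt_iff.1 hcomp).fderiv

theorem fderivWithin_fderivWithin_coordReflection {U : Set (ι → ℝ)} (hU : IsOpen U)
    {u : (ι → ℝ) → F} (hC2 : ContDiffOn ℝ 2 u (U ∩ {x | 0 ≤ x i}))
    (hnormal : ∀ x ∈ U, x i = 0 → fderivWithin ℝ u (U ∩ {x | 0 ≤ x i}) x (Pi.single i 1) = 0)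
    {z : ι → ℝ} (hz : z ∈ U) (hzi : z i = 0) (v w : ι → ℝ) :
    fderivWithin ℝ (fderivWithin ℝ u (U ∩ {x | 0 ≤ x i})) (U ∩ {x | 0 ≤ x i}) z
        (coordReflection i v) (coordReflection i w) =
      fderivWithin ℝ (fderivWithin ℝ u (U ∩ {x | 0 ≤ x i})) (U ∩ {x | 0 ≤ x i}) z v w := by
  set Up := U ∩ {x | 0 ≤ x i}
  have hUp : UniqueDiffOn ℝ Up := uniqueDiffOn_inter_setOf_nonneg_apply hU
  have hzUp : z ∈ Up := ⟨hz, hzi.ge⟩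
  refine ContinuousLinearMap.apply_coordReflection_coordReflection (fun v w => ?_)
    (fun w hw => ?_) v w
  · exact (hC2 z hzUp).isSymmSndFDerivWithinAt minSmoothness_of_isRCLikeNormedField.le hUp
      (subset_closure_interior_inter_setOf_nonneg_apply hU hzUp) hzUp v w
  -- the normal derivative vanishes along the boundary, so its tangential derivatives do too
  have hderiv : HasFDerivWithinAt (fun x => fderivWithin ℝ u Up x (Pi.single i 1))
      ((ContinuousLinearMap.apply ℝ F (Pi.single i 1)).comp
        (fderivWithin ℝ (fderivWithin ℝ u Up) Up z)) Up z :=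
    (ContinuousLinearMap.apply ℝ F (Pi.single i 1)).hasFDerivAt.comp_hasFDerivWithinAt
      (f := fderivWithin ℝ u Up) z (((hC2.fderivWithin hUp (m := 1) (by norm_num)).differentiableOn
        one_ne_zero z hzUp).hasFDerivWithinAt)
  have := hderiv.map_sub_eq_zero_of_eqOn convex_setOf_apply_eq_zero
    (hU.mem_nhds hz) (fun x hx => ⟨hx.2, hx.1.ge⟩)
    (fun x hx => by rw [hnormal x hx.2 hx.1, hnormal z hz hzi]) hzi
    (y := z + w) (by simp [hzi, hw])
  simpa using this

end Reflection

/-- Reflection extension of `C²` regularity: let `σ` be the reflection of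
`ℝ^{n+1}` in the hyperplane `{x_{last} = 0}`, let `U` be a `σ`-invariant open
set, and let `u` be `σ`-symmetric on `U`.  If `u` is `C²` on
`U⁺ = U ∩ {x_{last} ≥ 0}` and the normal partial derivative of `u`, computed
within `U⁺`, vanishes on `U ∩ {x_{last} = 0}`, then `u` is `C²` on all of `U`. -/
theorem reflection_C2_extension (n : ℕ) (U : Set (Fin (n + 1) → ℝ))
    (hU : IsOpen U)
    (σ : (Fin (n + 1) → ℝ) → (Fin (n + 1) → ℝ))
    (hσ : ∀ x, σ x = Function.update x (Fin.last n) (-(x (Fin.last n))))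
    (hUinv : ∀ x ∈ U, σ x ∈ U)
    (u : (Fin (n + 1) → ℝ) → ℝ)
    (hsym : ∀ x ∈ U, u (σ x) = u x)
    (hC2 : ContDiffOn ℝ 2 u (U ∩ {x | 0 ≤ x (Fin.last n)}))
    (hnormal : ∀ x ∈ U, x (Fin.last n) = 0 →
      fderivWithin ℝ u (U ∩ {x | 0 ≤ x (Fin.last n)}) x (Pi.single (Fin.last n) 1) = 0) :
    ContDiffOn ℝ 2 u U := by
  obtain rfl : σ = coordReflection (Fin.last n) :=
    funext fun x => by rw [hσ, coordReflection_eq_update]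
  set Up := U ∩ {x | 0 ≤ x (Fin.last n)}
  have hUp : UniqueDiffOn ℝ Up := uniqueDiffOn_inter_setOf_nonneg_apply hU
  have hC1 : ContDiffOn ℝ 1 u U :=
    contDiffOn_one_of_coordReflection hU hUinv (.id ℝ ℝ) hsym
      (fun x hx => (hC2.differentiableOn (by norm_num) x hx).hasFDerivWithinAt)
      (hC2.continuousOn_fderivWithin hUp (by norm_num))
      fun z hz hzi => (ContinuousLinearMap.id_comp _).trans
        (ContinuousLinearMap.comp_coordReflection_eq_self (hnormal z hz hzi))
  have hdiff : DifferentiableOn ℝ u U := hC1.differentiableOn one_ne_zero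
  have hDu : ContDiffOn ℝ 1 (fderivWithin ℝ u Up) Up := hC2.fderivWithin hUp (m := 1) (by norm_num)
  have hfderiv : EqOn (fderiv ℝ u) (fderivWithin ℝ u Up) Up := fun x hx =>
    ((hdiff.differentiableAt (hU.mem_nhds hx.1)).fderivWithin (hUp x hx)).symm
  have hC1' : ContDiffOn ℝ 1 (fderiv ℝ u) U :=
    contDiffOn_one_of_coordReflection hU hUinv
      ((ContinuousLinearMap.compL ℝ _ (Fin (n + 1) → ℝ) ℝ).flip (coordReflection (Fin.last n)))
      (fun x hx => fderiv_coordReflection_eq_comp hU hUinv hsym hx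
        (hdiff.differentiableAt (hU.mem_nhds hx)))
      (fun x hx => (hDu.differentiableOn one_ne_zero x hx).hasFDerivWithinAt.congr hfderiv
        (hfderiv hx))
      (hDu.continuousOn_fderivWithin hUp le_rfl)
      fun z hz hzi => by
        ext v w
        exact fderivWithin_fderivWithin_coordReflection hU hC2 hnormal hz hzi v w
  rw [show (2 : WithTop ℕ∞) = 1 + 1 by norm_num, contDiffOn_succ_iff_fderiv_of_isOpen hU]
  exact ⟨hdiff, by simp, hC1'⟩
end
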